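/- arXiv:2411.10696 — 2 statements merged into one kernel-verified Lean document; each statement's English description precedes it below -/
import Mathlib

section
/- If either (1) L(θ) − min L ≤ μ R² / 16 or (2) ‖∇L(θ)‖₂ ≤ μ R / 4, then the Newton quadratic form satisfies ⟨∇L(θ), (∇²L(θ))⁻¹ ∇L(θ)⟩ ≤ 4 (L(θ) − min L) (Lemma 5, Quadratic Form Integration). -/
/-! Along the ray from `θs` through `θ`, the restriction of `L` has second derivative at least
`μ / 2` up to distance `R` (by Assumption 2) and is convex beyond, so a point at distance more than
`R` from `θs` has `‖∇L‖ ≥ μ R / 2` and `L - L θs ≥ μ R² / 4`; either hypothesis therefore puts `θ`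
within `R` of `θs`, where `∇²L θ ⪰ (μ / 2) I`.

Let `u = (∇²L θ)⁻¹ ∇L θ` and `λ = ⟪∇L θ, u⟫ = ⟪u, ∇²L θ u⟫ ≥ (μ / 2) ‖u‖²`. On the `R`-ball around
`θ` the Hessian is at most `2 ∇²L θ`, so `L θs ≤ L (θ - t u) ≤ L θ - t (1 - t) λ` whenever
`t ‖u‖ ≤ R`. Taking `t = R / ‖u‖` (under the first hypothesis) or Cauchy–Schwarz (under the second)
shows `‖u‖ ≤ 2 R`, and then `t = 1 / 2` gives `λ ≤ 4 (L θ - L θs)`. -/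

open Matrix Filter
open scoped RealInnerProductSpace

/-- Quadratic form of a matrix viewed as an operator on Euclidean space. -/
noncomputable def hessQF {d : ℕ} (A : Matrix (Fin d) (Fin d) ℝ)
    (v : EuclideanSpace ℝ (Fin d)) : ℝ :=
  ⟪v, Matrix.toEuclideanLin A v⟫


open Set

section OneDimensional

variable {f f' f'' : ℝ → ℝ} {a b m : ℝ}

theorem sub_le_sub_of_hasDerivAt_le {g g' : ℝ → ℝ} (hf : ∀ t, HasDerivAt f (f' t) t)
    (hg : ∀ t, HasDerivAt g (g' t) t) (hab : a ≤ b) (h : ∀ t ∈ Icc a b, f' t ≤ g' t) :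
    f b - f a ≤ g b - g a := by
  have hmono : MonotoneOn (fun t => g t - f t) (Icc a b) :=
    monotoneOn_of_hasDerivWithinAt_nonneg (convex_Icc a b)
      (fun t _ => ((hg t).sub (hf t)).continuousAt.continuousWithinAt)
      (fun t _ => ((hg t).sub (hf t)).hasDerivWithinAt)
      (fun t ht => sub_nonneg.2 (h t (interior_subset ht)))
  have := hmono ⟨le_rfl, hab⟩ ⟨hab, le_rfl⟩ hab
  simp only at this
  linarith

theorem add_mul_sub_le_of_hasDerivAt (hf' : ∀ t, HasDerivAt f' (f'' t) t) (hab : a ≤ b)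
    (hm : ∀ t ∈ Icc a b, m ≤ f'' t) : f' a + m * (b - a) ≤ f' b := by
  have hlin : ∀ t, HasDerivAt (fun t => m * t) m t := fun t => by
    simpa using (hasDerivAt_id t).const_mul m
  have := sub_le_sub_of_hasDerivAt_le hlin hf' hab hm
  linarith

theorem taylor_lower_bound (hf : ∀ t, HasDerivAt f (f' t) t)
    (hf' : ∀ t, HasDerivAt f' (f'' t) t) (hab : a ≤ b) (hm : ∀ t ∈ Icc a b, m ≤ f'' t) :
    f a + f' a * (b - a) + m / 2 * (b - a) ^ 2 ≤ f b := by
  have hquad : ∀ t, HasDerivAt (fun t => f' a * t + m / 2 * (t - a) ^ 2)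
      (f' a + m * (t - a)) t := fun t => by
    have := ((hasDerivAt_id' t).const_mul (f' a)).fun_add
      ((((hasDerivAt_id' t).sub_const a).fun_pow 2).const_mul (m / 2))
    exact this.congr_deriv (by push_cast; ring)
  have := sub_le_sub_of_hasDerivAt_le hquad hf hab fun t ht =>
    add_mul_sub_le_of_hasDerivAt hf' ht.1 fun s hs => hm s ⟨hs.1, hs.2.trans ht.2⟩
  simp only [sub_self] at this
  linarith

theorem taylor_upper_bound (hf : ∀ t, HasDerivAt f (f' t) t)
    (hf' : ∀ t, HasDerivAt f' (f'' t) t) (hab : a ≤ b) (hm : ∀ t ∈ Icc a b, f'' t ≤ m) :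
    f b ≤ f a + f' a * (b - a) + m / 2 * (b - a) ^ 2 := by
  have := taylor_lower_bound (fun t => (hf t).neg) (fun t => (hf' t).neg) hab (m := -m)
    fun t ht => neg_le_neg (hm t ht)
  simp only [Pi.neg_apply] at this
  linarith

theorem mul_le_deriv_and_mul_sq_le_sub_of_hasDerivAt {c R s : ℝ} (hf : ∀ t, HasDerivAt f (f' t) t)
    (hf' : ∀ t, HasDerivAt f' (f'' t) t) (h0 : f' 0 = 0) (hc : 0 ≤ c) (hR : 0 ≤ R)
    (hRs : R ≤ s) (hnear : ∀ t ∈ Icc 0 R, c ≤ f'' t) (hfar : ∀ t ∈ Icc R s, 0 ≤ f'' t) :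
    c * R ≤ f' s ∧ c / 2 * R ^ 2 ≤ f s - f 0 := by
  have slope_R := add_mul_sub_le_of_hasDerivAt hf' hR hnear
  have slope_s := add_mul_sub_le_of_hasDerivAt hf' hRs hfar
  have value_R := taylor_lower_bound hf hf' hR hnear
  have value_s := taylor_lower_bound hf hf' hRs hfar
  rw [h0] at slope_R value_R
  have : 0 ≤ f' R * (s - R) := mul_nonneg (by nlinarith) (by linarith)
  constructor <;> nlinarith

end OneDimensional

section Lines

variable {E : Type*} [NormedAddCommGroup E] [InnerProductSpace ℝ E] [CompleteSpace E]
  {L : E → ℝ} {A : E → E →L[ℝ] E}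

theorem hasDerivAt_comp_add_smul (hL : Differentiable ℝ L) (p v : E) (t : ℝ) :
    HasDerivAt (fun s : ℝ => L (p + s • v)) ⟪gradient L (p + t • v), v⟫ t := by
  have hline : HasDerivAt (fun s : ℝ => p + s • v) v t := by
    simpa using ((hasDerivAt_id t).smul_const v).const_add p
  simpa [InnerProductSpace.toDual_apply_apply, Function.comp_def] using
    (hL (p + t • v)).hasGradientAt.hasFDerivAt.comp_hasDerivAt t hline

theorem hasDerivAt_inner_gradient_comp_add_smul (hA : ∀ x, HasFDerivAt (gradient L) (A x) x)
    (p v : E) (t : ℝ) :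
    HasDerivAt (fun s : ℝ => ⟪gradient L (p + s • v), v⟫) ⟪v, A (p + t • v) v⟫ t := by
  have hline : HasDerivAt (fun s : ℝ => p + s • v) v t := by
    simpa using ((hasDerivAt_id t).smul_const v).const_add p
  simpa [real_inner_comm] using
    ((hA (p + t • v)).comp_hasDerivAt t hline).inner ℝ (hasDerivAt_const t v)

variable (hL : Differentiable ℝ L) (hA : ∀ x, HasFDerivAt (gradient L) (A x) x)
include hL hA

theorem le_norm_gradient_and_le_sub_of_le_norm_sub {θs θ : E} {c R : ℝ}
    (hgrad0 : gradient L θs = 0) (hnn : ∀ x v, 0 ≤ ⟪v, A x v⟫) (hc : 0 ≤ c) (hR : 0 < R)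
    (hlb : ∀ x, ‖x - θs‖ ≤ R → ∀ v, c * ‖v‖ ^ 2 ≤ ⟪v, A x v⟫) (hθ : R ≤ ‖θ - θs‖) :
    c * R ≤ ‖gradient L θ‖ ∧ c / 2 * R ^ 2 ≤ L θ - L θs := by
  set s := ‖θ - θs‖
  have hs : θ - θs ≠ 0 := norm_pos_iff.1 (hR.trans_le hθ)
  set e := s⁻¹ • (θ - θs)
  have he : ‖e‖ = 1 := norm_smul_inv_norm hs
  have hθe : θs + s • e = θ := by
    simp [e, smul_smul, mul_inv_cancel₀ (show s ≠ 0 from norm_ne_zero_iff.2 hs)]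
  obtain ⟨hslope, hvalue⟩ := mul_le_deriv_and_mul_sq_le_sub_of_hasDerivAt
    (hasDerivAt_comp_add_smul hL θs e) (hasDerivAt_inner_gradient_comp_add_smul hA θs e)
    (by simp [hgrad0]) hc hR.le hθ
    (fun t ht => by
      have hdist : ‖θs + t • e - θs‖ ≤ R := by
        simpa [norm_smul, he, abs_of_nonneg ht.1] using ht.2
      simpa [he] using hlb _ hdist e)
    (fun t _ => hnn _ e)
  rw [hθe] at hslope hvalue
  refine ⟨hslope.trans ?_, by simpa using hvalue⟩
  simpa [he] using real_inner_le_norm (gradient L θ) e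

theorem le_add_inner_gradient_add_of_le_two_mul {θ w : E} {R : ℝ}
    (hub : ∀ x, ‖x - θ‖ ≤ R → ∀ v, ⟪v, A x v⟫ ≤ 2 * ⟪v, A θ v⟫) (hw : ‖w‖ ≤ R) :
    L (θ + w) ≤ L θ + ⟪gradient L θ, w⟫ + ⟪w, A θ w⟫ := by
  have := taylor_upper_bound (hasDerivAt_comp_add_smul hL θ w)
    (hasDerivAt_inner_gradient_comp_add_smul hA θ w) zero_le_one fun t ht => by
      refine hub _ ?_ w
      simpa [norm_smul, abs_of_nonneg ht.1] using
        (mul_le_of_le_one_left (norm_nonneg w) ht.2).trans hw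
  simpa using this

theorem mul_one_sub_mul_inner_le_sub {θs θ u : E} {R t : ℝ} (hmin : ∀ x, L θs ≤ L x)
    (hub : ∀ x, ‖x - θ‖ ≤ R → ∀ v, ⟪v, A x v⟫ ≤ 2 * ⟪v, A θ v⟫)
    (hu : A θ u = gradient L θ) (ht : 0 ≤ t) (htu : t * ‖u‖ ≤ R) :
    t * (1 - t) * ⟪gradient L θ, u⟫ ≤ L θ - L θs := by
  have hstep := le_add_inner_gradient_add_of_le_two_mul hL hA hub (w := (-t) • u)
    (by rwa [norm_smul, norm_neg, Real.norm_of_nonneg ht])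
  have hquad : ⟪u, A θ u⟫ = ⟪gradient L θ, u⟫ := by rw [hu, real_inner_comm]
  simp only [map_smul, real_inner_smul_left, real_inner_smul_right, hquad] at hstep
  nlinarith [hmin (θ + (-t) • u)]

theorem norm_le_two_mul_of_apply_eq_gradient {θs θ u : E} {μ R : ℝ} (hmin : ∀ x, L θs ≤ L x)
    (hub : ∀ x, ‖x - θ‖ ≤ R → ∀ v, ⟪v, A x v⟫ ≤ 2 * ⟪v, A θ v⟫)
    (hu : A θ u = gradient L θ) (hμ : 0 < μ) (hR : 0 < R)
    (hlam : μ / 2 * ‖u‖ ^ 2 ≤ ⟪gradient L θ, u⟫)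
    (hcond : L θ - L θs ≤ μ * R ^ 2 / 16 ∨ ‖gradient L θ‖ ≤ μ * R / 4) :
    ‖u‖ ≤ 2 * R := by
  by_contra! hbig
  have hun : 0 < ‖u‖ := by linarith
  rcases hcond with hgap | hgrad
  · set t := R / ‖u‖
    have ht0 : 0 ≤ t := by positivity
    have htu : t * ‖u‖ = R := div_mul_cancel₀ R hun.ne'
    have ht : t ≤ 1 / 2 := by
      rw [div_le_iff₀ hun]; linarith
    have hdecrease := mul_one_sub_mul_inner_le_sub hL hA hmin hub hu ht0 htu.le
    have hlam0 : 0 ≤ ⟪gradient L θ, u⟫ := le_trans (by positivity) hlam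
    have hhalf : t * ⟪gradient L θ, u⟫ / 2 ≤ t * (1 - t) * ⟪gradient L θ, u⟫ := by
      nlinarith [mul_nonneg (mul_nonneg (sub_nonneg.2 ht) ht0) hlam0]
    have hquad : μ / 2 * R * ‖u‖ ≤ t * ⟪gradient L θ, u⟫ :=
      calc μ / 2 * R * ‖u‖ = t * (μ / 2 * ‖u‖ ^ 2) := by rw [← htu]; ring
        _ ≤ t * ⟪gradient L θ, u⟫ := mul_le_mul_of_nonneg_left hlam ht0
    nlinarith [mul_pos hμ hR]
  · nlinarith [real_inner_le_norm (gradient L θ) u, mul_le_mul_of_nonneg_right hgrad hun.le,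
      mul_pos (mul_pos hμ hun) (sub_pos.2 hbig)]

theorem inner_le_four_mul_sub {θs θ u : E} {μ R : ℝ} (hmin : ∀ x, L θs ≤ L x)
    (hgrad0 : gradient L θs = 0) (hnn : ∀ x v, 0 ≤ ⟪v, A x v⟫) (hμ : 0 < μ) (hR : 0 < R)
    (hμlb : ∀ v, μ * ‖v‖ ^ 2 ≤ ⟪v, A θs v⟫)
    (hA2 : ∀ x y, ‖x - y‖ ≤ R → ∀ v,
      1 / 2 * ⟪v, A y v⟫ ≤ ⟪v, A x v⟫ ∧ ⟪v, A x v⟫ ≤ 2 * ⟪v, A y v⟫)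
    (hu : A θ u = gradient L θ)
    (hcond : L θ - L θs ≤ μ * R ^ 2 / 16 ∨ ‖gradient L θ‖ ≤ μ * R / 4) :
    ⟪gradient L θ, u⟫ ≤ 4 * (L θ - L θs) := by
  have hlb : ∀ x, ‖x - θs‖ ≤ R → ∀ v, μ / 2 * ‖v‖ ^ 2 ≤ ⟪v, A x v⟫ := fun x hx v => by
    linarith [(hA2 x θs hx v).1, hμlb v]
  have hub : ∀ x, ‖x - θ‖ ≤ R → ∀ v, ⟪v, A x v⟫ ≤ 2 * ⟪v, A θ v⟫ := fun x hx v =>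
    (hA2 x θ hx v).2
  have hθ : ‖θ - θs‖ ≤ R := by
    by_contra! hfar
    obtain ⟨hgrad, hgap⟩ := le_norm_gradient_and_le_sub_of_le_norm_sub hL hA hgrad0 hnn
      (by positivity) hR hlb hfar.le
    rcases hcond with h | h <;> nlinarith [mul_pos hμ hR, mul_pos (mul_pos hμ hR) hR]
  have hlam : μ / 2 * ‖u‖ ^ 2 ≤ ⟪gradient L θ, u⟫ := by
    simpa [← hu, real_inner_comm] using hlb θ hθ u
  have hu2R := norm_le_two_mul_of_apply_eq_gradient hL hA hmin hub hu hμ hR hlam hcond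
  have := mul_one_sub_mul_inner_le_sub hL hA hmin hub hu (t := 1 / 2) (by norm_num)
    (by linarith)
  linarith

end Lines

theorem stmt_6_general (d : ℕ)
    (L : EuclideanSpace ℝ (Fin d) → ℝ) (hL : ContDiff ℝ 2 L)
    (θs : EuclideanSpace ℝ (Fin d))
    (hmin : ∀ θ, θ ≠ θs → L θs < L θ)
    (hgrad0 : gradient L θs = 0)
    (H : EuclideanSpace ℝ (Fin d) → Matrix (Fin d) (Fin d) ℝ)
    (hH : ∀ x, HasFDerivAt (gradient L)
      (LinearMap.toContinuousLinearMap (Matrix.toEuclideanLin (H x))) x)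
    (hpd : ∀ x, (H x).PosDef)
    (μ : ℝ) (hμpos : 0 < μ)
    (hμlb : ∀ v : EuclideanSpace ℝ (Fin d), μ * ‖v‖ ^ 2 ≤ hessQF (H θs) v)
    (R : ℝ) (hR : 0 < R)
    (hA2 : ∀ θ θ' : EuclideanSpace ℝ (Fin d), ‖θ - θ'‖ ≤ R →
      ∀ v, (1/2) * hessQF (H θ') v ≤ hessQF (H θ) v ∧
        hessQF (H θ) v ≤ 2 * hessQF (H θ') v)
    (θ : EuclideanSpace ℝ (Fin d))
    (hcond : L θ - L θs ≤ μ * R ^ 2 / 16 ∨ ‖gradient L θ‖ ≤ μ * R / 4) :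
    ⟪gradient L θ, Matrix.toEuclideanLin ((H θ)⁻¹) (gradient L θ)⟫ ≤
      4 * (L θ - L θs) := by
  have hLmin : ∀ x, L θs ≤ L x := fun x =>
    (eq_or_ne x θs).elim (fun h => h ▸ le_rfl) fun h => (hmin x h).le
  have hnn : ∀ x v, 0 ≤ hessQF (H x) v := fun x v =>
    (Matrix.isPositive_toEuclideanLin_iff.2 (hpd x).posSemidef).inner_nonneg_right v
  have hu : Matrix.toEuclideanLin (H θ) (Matrix.toEuclideanLin (H θ)⁻¹ (gradient L θ)) =
      gradient L θ := by
    apply (WithLp.equiv 2 _).injective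
    simp [Matrix.mulVec_mulVec,
      Matrix.mul_nonsing_inv _ ((H θ).isUnit_iff_isUnit_det.1 (hpd θ).isUnit)]
  exact inner_le_four_mul_sub (hL.differentiable (by norm_num)) hH hLmin hgrad0 hnn hμpos hR
    hμlb hA2 hu hcond

/-- Lemma 5 (Quadratic Form Integration) -/
theorem stmt_6 (d : ℕ) (hd : 1 ≤ d)
    (L : EuclideanSpace ℝ (Fin d) → ℝ) (hL : ContDiff ℝ 2 L)
    (hconv : StrictConvexOn ℝ Set.univ L)
    (θs : EuclideanSpace ℝ (Fin d))
    (hmin : ∀ θ, θ ≠ θs → L θs < L θ)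
    (hgrad0 : gradient L θs = 0)
    (H : EuclideanSpace ℝ (Fin d) → Matrix (Fin d) (Fin d) ℝ)
    (hH : ∀ x, HasFDerivAt (gradient L)
      (LinearMap.toContinuousLinearMap (Matrix.toEuclideanLin (H x))) x)
    (hpd : ∀ x, (H x).PosDef)
    (μ : ℝ) (hμpos : 0 < μ)
    (hμlb : ∀ v : EuclideanSpace ℝ (Fin d), μ * ‖v‖ ^ 2 ≤ hessQF (H θs) v)
    (hμeig : ∃ v : EuclideanSpace ℝ (Fin d), v ≠ 0 ∧
      Matrix.toEuclideanLin (H θs) v = μ • v)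
    (R : ℝ) (hR : 0 < R)
    (hA2 : ∀ θ θ' : EuclideanSpace ℝ (Fin d), ‖θ - θ'‖ ≤ R →
      ∀ v, (1/2) * hessQF (H θ') v ≤ hessQF (H θ) v ∧
        hessQF (H θ) v ≤ 2 * hessQF (H θ') v)
    (θ : EuclideanSpace ℝ (Fin d))
    (hcond : L θ - L θs ≤ μ * R ^ 2 / 16 ∨ ‖gradient L θ‖ ≤ μ * R / 4) :
    ⟪gradient L θ, Matrix.toEuclideanLin ((H θ)⁻¹) (gradient L θ)⟫ ≤
      4 * (L θ - L θs) :=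
  stmt_6_general d L hL θs hmin hgrad0 H hH hpd μ hμpos hμlb R hR hA2 θ hcond
end

section
/- If either (1) L(θ) − min L ≤ μ R² / 4 or (2) ‖∇L(θ)‖₂ ≤ μ R / 2, then L(θ) − min L ≤ (1/μ) ‖∇L(θ)‖₂² (Lemma 6, Gradient and Loss Bound). -/
open Matrix Filter
open scoped RealInnerProductSpace

/-!
Inside the ball of radius `R` around `θ*` the Hessian is at least half of `∇²L(θ*)`, hence
`⪰ (μ/2) I`, so `L` is `μ/2`-strongly convex there. For `θ` in the ball, the strong-convexity
lower bound at `θ` evaluated at `θ*` gives `L θ - L θ* ≤ ‖g‖ r - μ r² / 4 ≤ ‖g‖² / μ`, where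
`g = ∇L(θ)` and `r = ‖θ - θ*‖`. For `θ` outside the ball, follow the ray from `θ*` to `θ`:
up to the sphere the directional derivative grows at rate at least `μ/2 ‖θ - θ*‖²`, and
beyond it, the Hessian being positive definite, it keeps growing strictly. Hence
`L θ - L θ*` and `‖∇L(θ)‖` exceed the thresholds `μ R² / 4` and `μ R / 2` respectively, so
neither hypothesis can hold there.
-/

open Set Metric

theorem mul_sub_le_sub_of_le_hasDerivAt {φ φ' : ℝ → ℝ} {a b c : ℝ}
    (hφ : ∀ t, HasDerivAt φ (φ' t) t) (hab : a ≤ b) (hc : ∀ t ∈ Icc a b, c ≤ φ' t) :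
    c * (b - a) ≤ φ b - φ a :=
  (convex_Icc a b).mul_sub_le_image_sub_of_le_deriv
    (fun t _ => (hφ t).continuousAt.continuousWithinAt)
    (fun t _ => (hφ t).differentiableAt.differentiableWithinAt)
    (fun t ht => (hφ t).deriv ▸ hc t (interior_subset ht)) a (left_mem_Icc.2 hab) b
    (right_mem_Icc.2 hab) hab

theorem add_mul_add_sq_le_of_le_hasDerivAt {φ φ' φ'' : ℝ → ℝ} {a b c : ℝ}
    (hφ : ∀ t, HasDerivAt φ (φ' t) t) (hφ' : ∀ t, HasDerivAt φ' (φ'' t) t) (hab : a ≤ b)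
    (hc : ∀ t ∈ Icc a b, c ≤ φ'' t) :
    φ a + φ' a * (b - a) + c / 2 * (b - a) ^ 2 ≤ φ b := by
  have hχ : ∀ t, HasDerivAt (fun s => φ s - φ' a * s - c / 2 * (s - a) ^ 2)
      (φ' t - φ' a - c * (t - a)) t := by
    intro t
    have hsq := ((hasDerivAt_id' t).sub_const a).fun_pow 2 |>.const_mul (c / 2)
    exact (((hφ t).fun_sub ((hasDerivAt_id' t).const_mul (φ' a))).fun_sub hsq).congr_deriv
      (by push_cast; ring)
  have hχ_nonneg : ∀ t ∈ Icc a b, 0 ≤ φ' t - φ' a - c * (t - a) := fun t ht => by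
    have := mul_sub_le_sub_of_le_hasDerivAt hφ' ht.1 fun s hs => hc s ⟨hs.1, hs.2.trans ht.2⟩
    linarith
  have := mul_sub_le_sub_of_le_hasDerivAt hχ hab hχ_nonneg
  linarith

section

variable {E : Type*} [NormedAddCommGroup E] [InnerProductSpace ℝ E]
  {f : E → ℝ} {f' : E → E} {f'' : E → E →L[ℝ] E}

theorem hasDerivAt_comp_line [CompleteSpace E] (hf : ∀ x, HasGradientAt f (f' x) x)
    (a v : E) (t : ℝ) :
    HasDerivAt (fun s : ℝ => f (a + s • v)) ⟪f' (a + t • v), v⟫ t := by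
  have hline : HasDerivAt (fun s : ℝ => a + s • v) v t := by
    simpa using ((hasDerivAt_id t).smul_const v).const_add a
  have h := (hf (a + t • v)).hasFDerivAt.comp_hasDerivAt t hline
  rwa [InnerProductSpace.toDual_apply_apply] at h

theorem hasDerivAt_inner_comp_line (hf' : ∀ x, HasFDerivAt f' (f'' x) x) (a v : E) (t : ℝ) :
    HasDerivAt (fun s : ℝ => ⟪f' (a + s • v), v⟫) ⟪f'' (a + t • v) v, v⟫ t := by
  have hline : HasDerivAt (fun s : ℝ => a + s • v) v t := by
    simpa using ((hasDerivAt_id t).smul_const v).const_add a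
  simpa using ((hf' (a + t • v)).comp_hasDerivAt t hline).inner ℝ (hasDerivAt_const t v)

theorem add_inner_add_sq_le_of_le_inner_hessian [CompleteSpace E]
    (hf : ∀ x, HasGradientAt f (f' x) x) (hf' : ∀ x, HasFDerivAt f' (f'' x) x)
    {a v : E} {s₀ s₁ m : ℝ} (hs : s₀ ≤ s₁)
    (hm : ∀ t ∈ Icc s₀ s₁, m * ‖v‖ ^ 2 ≤ ⟪f'' (a + t • v) v, v⟫) :
    f (a + s₀ • v) + ⟪f' (a + s₀ • v), v⟫ * (s₁ - s₀) + m * ‖v‖ ^ 2 / 2 * (s₁ - s₀) ^ 2 ≤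
      f (a + s₁ • v) :=
  add_mul_add_sq_le_of_le_hasDerivAt (hasDerivAt_comp_line hf a v)
    (hasDerivAt_inner_comp_line hf' a v) hs hm

theorem sub_le_norm_sq_div_of_le_inner_hessian [CompleteSpace E]
    (hf : ∀ x, HasGradientAt f (f' x) x) (hf' : ∀ x, HasFDerivAt f' (f'' x) x)
    {s : Set E} (hs : Convex ℝ s) {m : ℝ} (hm : 0 < m)
    (hH : ∀ y ∈ s, ∀ v, m * ‖v‖ ^ 2 ≤ ⟪f'' y v, v⟫) {x x₀ : E} (hx : x ∈ s) (hx₀ : x₀ ∈ s) :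
    f x - f x₀ ≤ ‖f' x‖ ^ 2 / (2 * m) := by
  have hlower := add_inner_add_sq_le_of_le_inner_hessian hf hf' (a := x) (v := x₀ - x)
    zero_le_one fun t ht => hH _ (hs.add_smul_sub_mem hx hx₀ ht) _
  simp only [zero_smul, add_zero, one_smul, add_sub_cancel, sub_zero, one_pow, mul_one]
    at hlower
  have hcs : -(‖f' x‖ * ‖x₀ - x‖) ≤ ⟪f' x, x₀ - x⟫ :=
    neg_le_of_abs_le (abs_real_inner_le_norm _ _)
  rw [le_div_iff₀ (by positivity)]
  nlinarith [sq_nonneg (m * ‖x₀ - x‖ - ‖f' x‖)]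

theorem add_smul_mem_closedBall {x₀ w : E} (hw : w ≠ 0) {R t : ℝ} (ht : t ∈ Icc 0 (R / ‖w‖)) :
    x₀ + t • w ∈ closedBall x₀ R := by
  rw [mem_closedBall_iff_norm, add_sub_cancel_left, norm_smul, Real.norm_of_nonneg ht.1,
    ← le_div_iff₀ (norm_pos_iff.2 hw)]
  exact ht.2

theorem mul_le_inner_of_mem_ray (hf' : ∀ x, HasFDerivAt f' (f'' x) x) {x₀ w : E}
    (hx₀ : f' x₀ = 0) (hw : w ≠ 0) {m R : ℝ}
    (hH : ∀ y ∈ closedBall x₀ R, ∀ v, m * ‖v‖ ^ 2 ≤ ⟪f'' y v, v⟫)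
    {t : ℝ} (ht : t ∈ Icc 0 (R / ‖w‖)) :
    m * ‖w‖ ^ 2 * t ≤ ⟪f' (x₀ + t • w), w⟫ := by
  have := mul_sub_le_sub_of_le_hasDerivAt (hasDerivAt_inner_comp_line hf' x₀ w) ht.1
    fun s hs => hH _ (add_smul_mem_closedBall hw ⟨hs.1, hs.2.trans ht.2⟩) w
  simpa [hx₀] using this

theorem mul_sq_div_two_lt_sub_of_lt_norm_sub [CompleteSpace E]
    (hf : ∀ x, HasGradientAt f (f' x) x) (hf' : ∀ x, HasFDerivAt f' (f'' x) x)
    {x₀ x : E} (hx₀ : f' x₀ = 0) {m R : ℝ} (hm : 0 < m) (hR : 0 < R)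
    (hH : ∀ y ∈ closedBall x₀ R, ∀ v, m * ‖v‖ ^ 2 ≤ ⟪f'' y v, v⟫)
    (hpsd : ∀ y v, 0 ≤ ⟪f'' y v, v⟫) (hx : R < ‖x - x₀‖) :
    m / 2 * R ^ 2 < f x - f x₀ := by
  set w := x - x₀
  have hw_pos : 0 < ‖w‖ := hR.trans hx
  have hw : w ≠ 0 := norm_pos_iff.1 hw_pos
  set t₀ := R / ‖w‖
  have ht₀w : t₀ * ‖w‖ = R := div_mul_cancel₀ _ hw_pos.ne'
  have ht₀_pos : 0 < t₀ := div_pos hR hw_pos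
  have ht₀_lt : t₀ < 1 := (div_lt_one hw_pos).2 hx
  have hslope := mul_le_inner_of_mem_ray hf' hx₀ hw hH ⟨ht₀_pos.le, le_rfl⟩
  have hinside := add_inner_add_sq_le_of_le_inner_hessian hf hf' (a := x₀) (v := w)
    ht₀_pos.le fun t ht => hH _ (add_smul_mem_closedBall hw ht) w
  have houtside := add_inner_add_sq_le_of_le_inner_hessian hf hf' (a := x₀) (v := w) (m := 0)
    ht₀_lt.le fun t _ => by simpa using hpsd _ w
  have hx_eq : x₀ + w = x := add_sub_cancel x₀ x
  simp only [zero_smul, add_zero, hx₀, inner_zero_left, zero_mul, sub_zero, one_smul,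
    hx_eq, zero_div] at hinside houtside
  have hR_sq : ‖w‖ ^ 2 * t₀ ^ 2 = R ^ 2 := by rw [← ht₀w]; ring
  have hgain : 0 < m * ‖w‖ ^ 2 * t₀ * (1 - t₀) := by
    have := sub_pos.2 ht₀_lt
    positivity
  nlinarith [mul_le_mul_of_nonneg_right hslope (sub_pos.2 ht₀_lt).le]

theorem mul_lt_norm_of_lt_norm_sub (hf' : ∀ x, HasFDerivAt f' (f'' x) x)
    {x₀ x : E} (hx₀ : f' x₀ = 0) {m R : ℝ} (hR : 0 ≤ R)
    (hH : ∀ y ∈ closedBall x₀ R, ∀ v, m * ‖v‖ ^ 2 ≤ ⟪f'' y v, v⟫)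
    (hpd : ∀ y v, v ≠ 0 → 0 < ⟪f'' y v, v⟫) (hx : R < ‖x - x₀‖) :
    m * R < ‖f' x‖ := by
  set w := x - x₀
  have hw_pos : 0 < ‖w‖ := hR.trans_lt hx
  have hw : w ≠ 0 := norm_pos_iff.1 hw_pos
  set t₀ := R / ‖w‖
  have ht₀w : t₀ * ‖w‖ = R := div_mul_cancel₀ _ hw_pos.ne'
  have ht₀_lt : t₀ < 1 := (div_lt_one hw_pos).2 hx
  have hslope := mul_le_inner_of_mem_ray hf' hx₀ hw hH ⟨div_nonneg hR hw_pos.le, le_rfl⟩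
  have hincr := strictMono_of_hasDerivAt_pos (hasDerivAt_inner_comp_line hf' x₀ w)
    (fun t => hpd _ w hw) ht₀_lt
  have hx_eq : x₀ + (1 : ℝ) • w = x := by rw [one_smul]; exact add_sub_cancel x₀ x
  simp only [hx_eq] at hincr
  have hcs : ⟪f' x, w⟫ ≤ ‖f' x‖ * ‖w‖ := real_inner_le_norm _ _
  have hslope' : m * R * ‖w‖ = m * ‖w‖ ^ 2 * t₀ := by rw [← ht₀w]; ring
  exact lt_of_mul_lt_mul_right (by linarith) hw_pos.le

end

theorem Matrix.PosDef.hessQF_pos {d : ℕ} {A : Matrix (Fin d) (Fin d) ℝ} (hA : A.PosDef)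
    {v : EuclideanSpace ℝ (Fin d)} (hv : v ≠ 0) : 0 < hessQF A v := by
  have h := (posDef_iff_dotProduct_mulVec.mp hA).2 (x := WithLp.ofLp v) (by simpa using hv)
  simpa [hessQF, EuclideanSpace.inner_eq_star_dotProduct, dotProduct_comm] using h

theorem stmt_7_general (d : ℕ)
    (L : EuclideanSpace ℝ (Fin d) → ℝ) (hL : ContDiff ℝ 2 L)
    (θs : EuclideanSpace ℝ (Fin d))
    (hgrad0 : gradient L θs = 0)
    (H : EuclideanSpace ℝ (Fin d) → Matrix (Fin d) (Fin d) ℝ)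
    (hH : ∀ x, HasFDerivAt (gradient L)
      (LinearMap.toContinuousLinearMap (Matrix.toEuclideanLin (H x))) x)
    (hpd : ∀ x, (H x).PosDef)
    (μ : ℝ) (hμpos : 0 < μ)
    (hμlb : ∀ v : EuclideanSpace ℝ (Fin d), μ * ‖v‖ ^ 2 ≤ hessQF (H θs) v)
    (R : ℝ) (hR : 0 < R)
    (hA2 : ∀ θ θ' : EuclideanSpace ℝ (Fin d), ‖θ - θ'‖ ≤ R →
      ∀ v, (1/2) * hessQF (H θ') v ≤ hessQF (H θ) v ∧
        hessQF (H θ) v ≤ 2 * hessQF (H θ') v)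
    (θ : EuclideanSpace ℝ (Fin d))
    (hcond : L θ - L θs ≤ μ * R ^ 2 / 4 ∨ ‖gradient L θ‖ ≤ μ * R / 2) :
    L θ - L θs ≤ (1 / μ) * ‖gradient L θ‖ ^ 2 := by
  have hgrad : ∀ x, HasGradientAt L (gradient L x) x :=
    fun x => ((hL.differentiable two_ne_zero) x).hasGradientAt
  have hQF : ∀ x v, hessQF (H x) v =
      ⟪LinearMap.toContinuousLinearMap (Matrix.toEuclideanLin (H x)) v, v⟫ :=
    fun x v => real_inner_comm _ _
  have hpos : ∀ x v, v ≠ 0 → 0 < hessQF (H x) v := fun x v hv => (hpd x).hessQF_pos hv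
  have hnonneg : ∀ x v, 0 ≤ hessQF (H x) v := fun x v => by
    rcases eq_or_ne v 0 with rfl | hv
    · simp [hessQF]
    · exact (hpos x v hv).le
  have hstrong : ∀ x ∈ closedBall θs R, ∀ v, μ / 2 * ‖v‖ ^ 2 ≤ hessQF (H x) v :=
    fun x hx v => by linarith [hμlb v, (hA2 x θs (mem_closedBall_iff_norm.1 hx) v).1]
  simp only [hQF] at hpos hnonneg hstrong
  rcases le_or_gt ‖θ - θs‖ R with hin | hout
  · calc L θ - L θs ≤ ‖gradient L θ‖ ^ 2 / (2 * (μ / 2)) :=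
          sub_le_norm_sq_div_of_le_inner_hessian hgrad hH (convex_closedBall θs R)
            (half_pos hμpos) hstrong (mem_closedBall_iff_norm.2 hin) (mem_closedBall_self hR.le)
      _ = (1 / μ) * ‖gradient L θ‖ ^ 2 := by field_simp
  · rcases hcond with hloss | hgrad_small
    · have := mul_sq_div_two_lt_sub_of_lt_norm_sub hgrad hH hgrad0 (half_pos hμpos) hR hstrong
        hnonneg hout
      linarith
    · have := mul_lt_norm_of_lt_norm_sub hH hgrad0 hR.le hstrong hpos hout
      linarith

/-- Lemma 6 (Gradient and Loss Bound) -/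
theorem stmt_7 (d : ℕ) (hd : 1 ≤ d)
    (L : EuclideanSpace ℝ (Fin d) → ℝ) (hL : ContDiff ℝ 2 L)
    (hconv : StrictConvexOn ℝ Set.univ L)
    (θs : EuclideanSpace ℝ (Fin d))
    (hmin : ∀ θ, θ ≠ θs → L θs < L θ)
    (hgrad0 : gradient L θs = 0)
    (H : EuclideanSpace ℝ (Fin d) → Matrix (Fin d) (Fin d) ℝ)
    (hH : ∀ x, HasFDerivAt (gradient L)
      (LinearMap.toContinuousLinearMap (Matrix.toEuclideanLin (H x))) x)
    (hpd : ∀ x, (H x).PosDef)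
    (μ : ℝ) (hμpos : 0 < μ)
    (hμlb : ∀ v : EuclideanSpace ℝ (Fin d), μ * ‖v‖ ^ 2 ≤ hessQF (H θs) v)
    (hμeig : ∃ v : EuclideanSpace ℝ (Fin d), v ≠ 0 ∧
      Matrix.toEuclideanLin (H θs) v = μ • v)
    (R : ℝ) (hR : 0 < R)
    (hA2 : ∀ θ θ' : EuclideanSpace ℝ (Fin d), ‖θ - θ'‖ ≤ R →
      ∀ v, (1/2) * hessQF (H θ') v ≤ hessQF (H θ) v ∧
        hessQF (H θ) v ≤ 2 * hessQF (H θ') v)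
    (θ : EuclideanSpace ℝ (Fin d))
    (hcond : L θ - L θs ≤ μ * R ^ 2 / 4 ∨ ‖gradient L θ‖ ≤ μ * R / 2) :
    L θ - L θs ≤ (1 / μ) * ‖gradient L θ‖ ^ 2 :=
  stmt_7_general d L hL θs hgrad0 H hH hpd μ hμpos hμlb R hR hA2 θ hcond
end
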